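/- Let n ≥ 2, let H_1, …, H_p be Hermitian U(1)-invariant complex matrices, and set V := Matrix.exp(-i·H_1)·…·Matrix.exp(-i·H_p) (an invertible U(1)-invariant matrix). Then Δ3(V) ≡ -(4/2^n) · Σ_{j=1}^{p} Σ_{l odd, 1 ≤ l ≤ n} (l-1) · Tr(H_j · C_l) (mod 2π), where each trace Tr(H_j · C_l) is real. -/

import Mathlib

/-!
Every factor `exp (-i H_j)` is U(1)-invariant; restriction to a Hamming-weight block is
multiplicative on U(1)-invariant matrices and commutes with `exp`, so
`det V_m = exp (-i ∑_j Tr (H_j)_m)` (for Hermitian `H_j` via the spectral theorem), hence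
`θ_m(V) ≡ -∑_j Re Tr (H_j)_m`. It remains to write `Tr A_{n-1} - Tr A_1 - (n-2)(Tr A_n - Tr A_0)`
through the diagonal operators `C_l`. At a label `z` with signs `x_i = (-1)^{z i}`, the entry of
`C_l` is the elementary symmetric polynomial `e_l(x)`, the coefficient of `t^l` in
`G(t) = ∏ (1 + x_i t)`. Splitting off odd `l`, `2 ∑_{l odd} (l-1) e_l(x) = Φ(x) - Φ(-x)` with
`Φ = G'(1) - G(1)`, and `Φ(x)` vanishes unless `|z| ≤ 1`; the signs `-x` are those of the
complementary label, of weight `n - |z|`.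
-/

open Finset Matrix

noncomputable section

/-- Hamming weight of a basis label. -/
def hw {n : ℕ} (z : Fin n → Bool) : ℕ := (Finset.univ.filter fun i => z i = true).card

/-- The sign `(-1)^{z i}` of a bit. -/
def sgn (b : Bool) : ℂ := if b = true then -1 else 1

/-- The operator `C_l`: the diagonal matrix with entry
`∑_{S ⊆ Fin n, |S| = l} ∏_{i ∈ S} (-1)^{z i}`. -/
def Cmat (n l : ℕ) : Matrix (Fin n → Bool) (Fin n → Bool) ℂ :=
  Matrix.diagonal fun z => ∑ S ∈ Finset.powersetCard l (Finset.univ : Finset (Fin n)),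
    ∏ i ∈ S, sgn (z i)

/-- A matrix is U(1)-invariant if it vanishes off the Hamming-weight blocks. -/
def U1Invariant {n : ℕ} (M : Matrix (Fin n → Bool) (Fin n → Bool) ℂ) : Prop :=
  ∀ z z', hw z ≠ hw z' → M z z' = 0

/-- The weight-`m` block `M_m` of a matrix `M`. -/
def block {n : ℕ} (M : Matrix (Fin n → Bool) (Fin n → Bool) ℂ) (m : ℕ) :
    Matrix {z : Fin n → Bool // hw z = m} {z : Fin n → Bool // hw z = m} ℂ :=
  fun a b => M a.1 b.1

/-- The phase `θ_m(V) = arg det(V_m)`. -/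
def theta {n : ℕ} (V : Matrix (Fin n → Bool) (Fin n → Bool) ℂ) (m : ℕ) : ℝ :=
  Complex.arg (Matrix.det (block V m))

/-- The phase `Δ3(V) = θ_{n-1} - θ_1 - (n-2)(θ_n - θ_0)`. -/
def Delta3 {n : ℕ} (V : Matrix (Fin n → Bool) (Fin n → Bool) ℂ) : ℝ :=
  theta V (n-1) - theta V 1 - ((n : ℝ) - 2) * (theta V n - theta V 0)

/-- `x ≡ y (mod 2π)`. -/
def Mod2Pi (x y : ℝ) : Prop := ∃ j : ℤ, x - y = 2 * Real.pi * j

open NormedSpace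

namespace Finset

variable {ι R : Type*}

theorem sum_powerset_card_mul_prod [CommSemiring R] [DecidableEq ι] (s : Finset ι) (t : ι → R) :
    ∑ S ∈ s.powerset, (S.card : R) * ∏ i ∈ S, t i
      = ∑ i ∈ s, t i * ∏ j ∈ s.erase i, (1 + t j) := by
  induction s using Finset.induction_on with
  | empty => simp
  | @insert a s ha ih =>
    have hcard : ∀ S ∈ s.powerset, ((insert a S).card : R) * ∏ i ∈ insert a S, t i
        = t a * ((S.card : R) * ∏ i ∈ S, t i) + t a * ∏ i ∈ S, t i := by
      intro S hS
      have haS : a ∉ S := fun h => ha (mem_powerset.mp hS h)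
      rw [card_insert_of_notMem haS, prod_insert haS]
      push_cast
      ring
    have herase : ∀ i ∈ s, t i * ∏ j ∈ (insert a s).erase i, (1 + t j)
        = (1 + t a) * (t i * ∏ j ∈ s.erase i, (1 + t j)) := by
      intro i hi
      rw [erase_insert_of_ne (ne_of_mem_of_not_mem hi ha).symm,
        prod_insert (fun h => ha (mem_of_mem_erase h))]
      ring
    rw [sum_powerset_insert ha, sum_insert ha, erase_insert ha, sum_congr rfl hcard,
      sum_congr rfl herase, sum_add_distrib, ← mul_sum, ← mul_sum, ← mul_sum, ih, ← prod_one_add]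
    ring

theorem two_mul_sum_odd_card_sub_one [CommRing R] (s : Finset ι) (x : ι → R) :
    2 * ∑ l ∈ (range (s.card + 1)).filter Odd, ((l : R) - 1) * ∑ S ∈ s.powersetCard l, ∏ i ∈ S, x i
      = ∑ S ∈ s.powerset, ((S.card : R) - 1) * ∏ i ∈ S, x i
        - ∑ S ∈ s.powerset, ((S.card : R) - 1) * ∏ i ∈ S, -x i := by
  rw [sum_powerset, sum_powerset, ← sum_sub_distrib, sum_filter, mul_sum]
  refine sum_congr rfl fun l _ => ?_
  have hterm : ∀ S ∈ s.powersetCard l, ((S.card : R) - 1) * ∏ i ∈ S, x i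
      - ((S.card : R) - 1) * ∏ i ∈ S, -x i = (1 - (-1) ^ l) * (((l : R) - 1) * ∏ i ∈ S, x i) := by
    intro S hS
    rw [prod_neg, (mem_powersetCard.mp hS).2]
    ring
  rw [← sum_sub_distrib, sum_congr rfl hterm, ← mul_sum, ← mul_sum]
  rcases l.even_or_odd with hl | hl
  · simp [hl.neg_one_pow, Nat.not_odd_iff_even.mpr hl]
  · rw [if_pos hl, hl.neg_one_pow]
    ring

end Finset

section signs

variable {n : ℕ}

theorem sgn_not (b : Bool) : sgn (!b) = -sgn b := by cases b <;> simp [sgn]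

theorem prod_one_add_sgn {ι : Type*} (s : Finset ι) (z : ι → Bool) :
    ∏ i ∈ s, (1 + sgn (z i)) = if ∀ i ∈ s, z i = false then 2 ^ s.card else 0 := by
  split_ifs with h
  · rw [← prod_const]
    exact prod_congr rfl fun i hi => by norm_num [sgn, h i hi]
  · obtain ⟨i, hi, hzi⟩ : ∃ i ∈ s, z i = true := by simpa using h
    exact prod_eq_zero hi (by simp [sgn, hzi])

theorem hw_le (z : Fin n → Bool) : hw z ≤ n :=
  (card_filter_le _ _).trans_eq (card_fin n)

theorem hw_not (z : Fin n → Bool) : hw (fun i => !z i) = n - hw z := by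
  have := card_filter_add_card_filter_not (s := (univ : Finset (Fin n))) (fun i => z i = true)
  simp only [card_univ, Fintype.card_fin, Bool.not_eq_true] at this
  simp only [hw, Bool.not_eq_eq_eq_not, Bool.not_true]
  omega

theorem sum_ite_forall_erase_eq_false_sgn (z : Fin n → Bool) :
    ∑ i, (if ∀ j ∈ univ.erase i, z j = false then sgn (z i) else 0)
      = (n : ℂ) * (if hw z = 0 then 1 else 0) - (if hw z = 1 then 1 else 0) := by
  have hmem : ∀ j, j ∈ univ.filter (fun i => z i = true) ↔ z j = true := by simp
  rcases Nat.lt_or_ge (hw z) 2 with hlt | hge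
  · interval_cases h : hw z
    · have hz : ∀ i, z i = false := by simpa [hw, filter_eq_empty_iff] using h
      simp [hz, sgn]
    · obtain ⟨i₀, hi₀⟩ := card_eq_one.mp h
      have hz : ∀ j, z j = true ↔ j = i₀ := fun j => by rw [← hmem, hi₀, mem_singleton]
      rw [sum_eq_single i₀]
      · simp [hz, sgn]
      · intro i _ hi
        rw [if_neg]
        simpa [hz] using hi.symm
      · simp
  · rw [if_neg (by omega), if_neg (by omega), mul_zero, sub_zero]
    refine sum_eq_zero fun i _ => if_neg ?_
    obtain ⟨j, hj, hji⟩ := exists_mem_ne hge i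
    simp only [not_forall]
    exact ⟨j, mem_erase.mpr ⟨hji, mem_univ j⟩, by simpa using (hmem j).mp hj⟩

theorem two_mul_sum_sgn_mul_prod_erase (z : Fin n → Bool) :
    2 * ∑ i, sgn (z i) * ∏ j ∈ univ.erase i, (1 + sgn (z j))
      = 2 ^ n * ((n : ℂ) * (if hw z = 0 then 1 else 0) - (if hw z = 1 then 1 else 0)) := by
  have hterm : ∀ i, 2 * (sgn (z i) * ∏ j ∈ univ.erase i, (1 + sgn (z j)))
      = 2 ^ n * (if ∀ j ∈ univ.erase i, z j = false then sgn (z i) else 0) := by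
    intro i
    have hpow : 2 * (2 : ℂ) ^ (univ.erase i).card = 2 ^ n := by
      rw [card_erase_of_mem (mem_univ i), card_univ, Fintype.card_fin, ← pow_succ',
        Nat.sub_add_cancel i.pos]
    rw [prod_one_add_sgn, ← hpow]
    split_ifs <;> ring
  rw [mul_sum, sum_congr rfl fun i _ => hterm i, ← mul_sum, sum_ite_forall_erase_eq_false_sgn]

theorem two_mul_sum_powerset_card_sub_one_mul_prod_sgn (z : Fin n → Bool) :
    2 * ∑ S ∈ (univ : Finset (Fin n)).powerset, ((S.card : ℂ) - 1) * ∏ i ∈ S, sgn (z i)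
      = 2 ^ n * (((n : ℂ) - 2) * (if hw z = 0 then 1 else 0) - (if hw z = 1 then 1 else 0)) := by
  have hzero : (∀ i ∈ (univ : Finset (Fin n)), z i = false) ↔ hw z = 0 := by
    simp [hw, filter_eq_empty_iff]
  simp only [sub_mul, one_mul, sum_sub_distrib, sum_powerset_card_mul_prod, ← prod_one_add,
    mul_sub]
  rw [two_mul_sum_sgn_mul_prod_erase, prod_one_add_sgn]
  simp only [hzero, card_univ, Fintype.card_fin]
  split_ifs <;> ring

/-- The coefficient of `A z z` in `Tr A_{n-1} - Tr A_1 - (n-2)(Tr A_n - Tr A_0)` when `hw z = k`. -/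
def delta3Weight (n k : ℕ) : ℂ :=
  (if k = n - 1 then 1 else 0) - (if k = 1 then 1 else 0)
    - ((n : ℂ) - 2) * ((if k = n then 1 else 0) - (if k = 0 then 1 else 0))

theorem four_mul_sum_odd_card_sub_one (hn : n ≠ 0) (z : Fin n → Bool) :
    4 * ∑ l ∈ (range (n + 1)).filter (fun l => Odd l),
        ((l : ℂ) - 1) * ∑ S ∈ powersetCard l (univ : Finset (Fin n)), ∏ i ∈ S, sgn (z i)
      = 2 ^ n * delta3Weight n (hw z) := by
  have hneg : ∀ i, -sgn (z i) = sgn (!z i) := fun i => (sgn_not (z i)).symm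
  have h0 : n - hw z = 0 ↔ hw z = n := by have := hw_le z; omega
  have h1 : n - hw z = 1 ↔ hw z = n - 1 := by have := hw_le z; omega
  have hodd := two_mul_sum_odd_card_sub_one (univ : Finset (Fin n)) (fun i => sgn (z i))
  rw [card_fin] at hodd
  rw [show (4 : ℂ) = 2 * 2 by norm_num, mul_assoc, hodd, mul_sub]
  simp only [hneg, two_mul_sum_powerset_card_sub_one_mul_prod_sgn, hw_not, h0, h1, delta3Weight]
  ring

end signs

namespace U1Invariant

variable {n : ℕ} {M N : Matrix (Fin n → Bool) (Fin n → Bool) ℂ}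

theorem mul (hM : U1Invariant M) (hN : U1Invariant N) : U1Invariant (M * N) := by
  intro z z' h
  refine (mul_apply ..).trans (sum_eq_zero fun c _ => ?_)
  by_cases hc : hw z = hw c
  · rw [hN c z' (hc ▸ h), mul_zero]
  · rw [hM z c hc, zero_mul]

end U1Invariant

def u1Subalgebra (n : ℕ) : Subalgebra ℂ (Matrix (Fin n → Bool) (Fin n → Bool) ℂ) where
  carrier := {M | U1Invariant M}
  mul_mem' := U1Invariant.mul
  add_mem' hM hN z z' h := by simp [hM z z' h, hN z z' h]
  algebraMap_mem' c z z' h := by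
    simp [algebraMap_eq_diagonal, diagonal_apply_ne _ (ne_of_apply_ne hw h)]

theorem isClosed_u1Subalgebra (n : ℕ) :
    IsClosed (u1Subalgebra n : Set (Matrix (Fin n → Bool) (Fin n → Bool) ℂ)) := by
  change IsClosed {M : Matrix (Fin n → Bool) (Fin n → Bool) ℂ | ∀ z z', hw z ≠ hw z' → M z z' = 0}
  simp only [Set.ofPred_forall]
  exact isClosed_iInter fun z => isClosed_iInter fun z' => isClosed_iInter fun _ =>
    isClosed_eq (continuous_id.matrix_elem z z') continuous_const

theorem U1Invariant.exp {n : ℕ} {M : Matrix (Fin n → Bool) (Fin n → Bool) ℂ}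
    (hM : U1Invariant M) : U1Invariant (exp M) :=
  exp_mem (s := u1Subalgebra n) (isClosed_u1Subalgebra n) hM

section block

variable {n : ℕ}

theorem block_one (m : ℕ) : block (1 : Matrix (Fin n → Bool) (Fin n → Bool) ℂ) m = 1 := by
  ext a b
  simp [block, one_apply, Subtype.ext_iff]

theorem block_mul {M : Matrix (Fin n → Bool) (Fin n → Bool) ℂ} (hM : U1Invariant M)
    (N : Matrix (Fin n → Bool) (Fin n → Bool) ℂ) (m : ℕ) :
    block (M * N) m = block M m * block N m := by
  ext a b
  change ∑ c, M a.1 c * N c b.1 = ∑ c : {z // hw z = m}, M a.1 c.1 * N c.1 b.1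
  rw [← sum_subtype (univ.filter fun z => hw z = m) (fun z => by simp) (fun c => M a.1 c * N c b.1)]
  refine (sum_subset (filter_subset _ _) fun c _ hc => ?_).symm
  rw [hM a.1 c (by simpa [a.2, eq_comm] using hc), zero_mul]

theorem block_pow {M : Matrix (Fin n → Bool) (Fin n → Bool) ℂ} (hM : U1Invariant M) (m k : ℕ) :
    block (M ^ k) m = block M m ^ k := by
  induction k with
  | zero => exact block_one m
  | succ k ih => rw [pow_succ', pow_succ', block_mul hM, ih]

theorem block_exp {M : Matrix (Fin n → Bool) (Fin n → Bool) ℂ} (hM : U1Invariant M) (m : ℕ) :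
    block (exp M) m = exp (block M m) := by
  have hM_sum : HasSum (fun k => (k.factorial⁻¹ : ℂ) • M ^ k) (exp M) := by
    open scoped Matrix.Norms.Operator in exact exp_series_hasSum_exp' M
  have hblock_sum : HasSum (fun k => (k.factorial⁻¹ : ℂ) • block M m ^ k) (block (exp M) m) := by
    simp_rw [← block_pow hM]
    exact Pi.hasSum.mpr fun a => Pi.hasSum.mpr fun b => Pi.hasSum.mp (Pi.hasSum.mp hM_sum a.1) b.1
  rw [← hblock_sum.tsum_eq, exp_eq_tsum ℂ]

theorem block_list_prod (L : List (Matrix (Fin n → Bool) (Fin n → Bool) ℂ))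
    (hL : ∀ M ∈ L, U1Invariant M) (m : ℕ) :
    block L.prod m = (L.map (block · m)).prod := by
  induction L with
  | nil => exact block_one m
  | cons M L ih =>
    rw [List.prod_cons, List.map_cons, List.prod_cons, block_mul (hL M List.mem_cons_self),
      ih fun N hN => hL N (List.mem_cons_of_mem M hN)]

theorem trace_block (A : Matrix (Fin n → Bool) (Fin n → Bool) ℂ) (m : ℕ) :
    (block A m).trace = ∑ z, if hw z = m then A z z else 0 := by
  rw [← sum_filter]
  exact (sum_subtype _ (fun z => by simp) (fun z => A z z)).symm

end block

theorem Matrix.IsHermitian.det_exp_smul {ι : Type*} [Fintype ι] [DecidableEq ι]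
    {A : Matrix ι ι ℂ} (hA : A.IsHermitian) (c : ℂ) :
    (NormedSpace.exp (c • A)).det = Complex.exp (c * A.trace) := by
  set U : Matrix ι ι ℂ := (hA.eigenvectorUnitary : Matrix ι ι ℂ)
  have hU : star U * U = 1 := Unitary.star_mul_self_of_mem hA.eigenvectorUnitary.2
  have hconj : c • A = U * diagonal (fun i => c * hA.eigenvalues i) * U⁻¹ := by
    conv_lhs => rw [hA.spectral_theorem]
    rw [Unitary.conjStarAlgAut_apply, inv_eq_left_inv hU, ← Matrix.smul_mul, ← Matrix.mul_smul,
      ← diagonal_smul]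
    rfl
  rw [hconj, exp_conj _ _ Unitary.isUnit_coe, det_conj Unitary.isUnit_coe, exp_diagonal,
    det_diagonal, hA.trace_eq_sum_eigenvalues, mul_sum, Complex.exp_sum]
  simp [Complex.exp_eq_exp_ℂ]

theorem det_block_prod_exp {n p : ℕ} {H : Fin p → Matrix (Fin n → Bool) (Fin n → Bool) ℂ}
    (hherm : ∀ j, (H j).IsHermitian) (hU1 : ∀ j, U1Invariant (H j)) (m : ℕ) :
    (block (List.ofFn fun j => exp ((-Complex.I) • H j)).prod m).det
      = Complex.exp (-Complex.I * ∑ j, (block (H j) m).trace) := by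
  have hU1exp : ∀ M ∈ List.ofFn fun j => exp ((-Complex.I) • H j), U1Invariant M := by
    simp only [List.mem_ofFn]
    rintro _ ⟨j, rfl⟩
    exact U1Invariant.exp ((u1Subalgebra n).smul_mem (hU1 j) _)
  have hfactor : ∀ j, (block (exp ((-Complex.I) • H j)) m).det
      = Complex.exp (-Complex.I * (block (H j) m).trace) := fun j => by
    rw [block_exp ((u1Subalgebra n).smul_mem (hU1 j) _)]
    exact ((hherm j).submatrix Subtype.val).det_exp_smul _
  rw [block_list_prod _ hU1exp, ← coe_detMonoidHom, map_list_prod, List.map_map, List.map_ofFn,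
    List.prod_ofFn, mul_sum, Complex.exp_sum]
  exact prod_congr rfl fun j _ => hfactor j

theorem trace_mul_Cmat {n : ℕ} (A : Matrix (Fin n → Bool) (Fin n → Bool) ℂ) (l : ℕ) :
    (A * Cmat n l).trace = ∑ z, A z z * ∑ S ∈ powersetCard l univ, ∏ i ∈ S, sgn (z i) := by
  simp [Cmat, trace, mul_diagonal]

theorem trace_block_combination {n : ℕ} (hn : n ≠ 0) (A : Matrix (Fin n → Bool) (Fin n → Bool) ℂ) :
    (block A (n - 1)).trace - (block A 1).trace
        - ((n : ℝ) - 2) • ((block A n).trace - (block A 0).trace)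
      = (4 / 2 ^ n : ℝ) • ∑ l ∈ (range (n + 1)).filter (fun l => Odd l),
          ((l : ℝ) - 1) • (A * Cmat n l).trace := by
  calc _ = ∑ z, A z z * delta3Weight n (hw z) := by
        simp only [trace_block, delta3Weight, Complex.real_smul, ← sum_sub_distrib, mul_sum]
        refine sum_congr rfl fun z _ => ?_
        push_cast
        split_ifs <;> ring
    _ = ∑ z, A z z * ((4 / 2 ^ n : ℂ) * ∑ l ∈ (range (n + 1)).filter (fun l => Odd l),
          ((l : ℂ) - 1) * ∑ S ∈ powersetCard l univ, ∏ i ∈ S, sgn (z i)) := by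
        simp only [div_mul_eq_mul_div, four_mul_sum_odd_card_sub_one hn,
          mul_div_cancel_left₀ _ (pow_ne_zero n (two_ne_zero' ℂ))]
    _ = _ := by
        simp only [Complex.real_smul, trace_mul_Cmat, mul_sum]
        rw [sum_comm]
        refine sum_congr rfl fun l _ => sum_congr rfl fun z _ => sum_congr rfl fun S _ => ?_
        push_cast
        ring

theorem Complex.exists_arg_exp_eq (z : ℂ) : ∃ k : ℤ, arg (exp z) = z.im + 2 * Real.pi * k :=
  ⟨-toIocDiv Real.two_pi_pos (-Real.pi) z.im, by
    rw [arg_exp, toIocMod, zsmul_eq_mul]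
    push_cast
    ring⟩

theorem mod2Pi_delta3_of_theta {n : ℕ} {V : Matrix (Fin n → Bool) (Fin n → Bool) ℂ} {t : ℕ → ℝ}
    (ht : ∀ m, ∃ k : ℤ, theta V m = t m + 2 * Real.pi * k) :
    Mod2Pi (Delta3 V) (t (n - 1) - t 1 - ((n : ℝ) - 2) * (t n - t 0)) := by
  obtain ⟨k₁, h₁⟩ := ht (n - 1)
  obtain ⟨k₂, h₂⟩ := ht 1
  obtain ⟨k₃, h₃⟩ := ht n
  obtain ⟨k₄, h₄⟩ := ht 0
  refine ⟨k₁ - k₂ - ((n : ℤ) - 2) * (k₃ - k₄), ?_⟩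
  rw [Delta3, h₁, h₂, h₃, h₄]
  push_cast
  ring

/-- for `V` a product of exponentials of Hermitian U(1)-invariant
Hamiltonians, `Δ3(V) ≡ -(4/2^n) ∑_j ∑_{l odd} (l-1) Tr(H_j C_l) (mod 2π)`. -/
theorem stmt17 (n : ℕ) (hn : 2 ≤ n) (p : ℕ)
    (H : Fin p → Matrix (Fin n → Bool) (Fin n → Bool) ℂ)
    (hherm : ∀ j, (H j).IsHermitian) (hU1 : ∀ j, U1Invariant (H j))
    (V : Matrix (Fin n → Bool) (Fin n → Bool) ℂ)
    (hV : V = (List.ofFn fun j => NormedSpace.exp ((-Complex.I) • H j)).prod) :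
    Mod2Pi (Delta3 V)
      (-(4 / 2^n) * ∑ j, ∑ l ∈ (Finset.range (n+1)).filter (fun l => Odd l),
        ((l : ℝ) - 1) * (Matrix.trace (H j * Cmat n l)).re) := by
  set T : ℕ → ℂ := fun m => ∑ j, (block (H j) m).trace
  have htheta : ∀ m, ∃ k : ℤ, theta V m = -(T m).re + 2 * Real.pi * k := fun m => by
    obtain ⟨k, hk⟩ := Complex.exists_arg_exp_eq (-Complex.I * T m)
    exact ⟨k, by rw [theta, hV, det_block_prod_exp hherm hU1 m, hk]; simp⟩
  have hcomb : ∀ j, (block (H j) (n - 1)).trace.re - (block (H j) 1).trace.re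
      - ((n : ℝ) - 2) * ((block (H j) n).trace.re - (block (H j) 0).trace.re)
      = 4 / 2 ^ n * ∑ l ∈ (range (n + 1)).filter (fun l => Odd l),
          ((l : ℝ) - 1) * (H j * Cmat n l).trace.re := fun j => by
    simpa only [Complex.smul_re, Complex.sub_re, Complex.re_sum, smul_eq_mul] using
      congrArg Complex.re (trace_block_combination (by omega) (H j))
  convert mod2Pi_delta3_of_theta htheta using 1
  rw [neg_mul, mul_sum, sum_congr rfl fun j _ => (hcomb j).symm]
  simp only [T, Complex.re_sum, sum_sub_distrib, ← mul_sum]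
  ring
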